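/- The function d(c) = (1+c)·κ(c) + (1 + 1/c)·κ(1/c) is decreasing for c > 1, where κ(c) = 3/(2c·log²c) − (2c+1)/(c(c−1)·log c) + (c+2)/(2(c−1)²). -/

import Mathlib

noncomputable def kappa (c : ℝ) : ℝ :=
  3 / (2 * c * (Real.log c) ^ 2) - (2 * c + 1) / (c * (c - 1) * Real.log c) +
    (c + 2) / (2 * (c - 1) ^ 2)

/-!
Since `log (1/c) = -log c`, the function equals `N(c, log c) / (2c(c-1)² log² c)` with `N`
a polynomial, so its derivative is `M(c, log c) / (2c²(c-1)³ log³ c)` for a polynomial `M`.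
Putting `a = c - 1` and `v = c log c - (c - 1)`, which is nonnegative because `log c ≥ 1 - 1/c`,
the product `-c³ M` becomes a polynomial `Q(a, v)` that is nonnegative for `a > 0`, `v ≥ 0`.
Since `v ≈ a²/2` for small `a`, it is certified by completing the square in `v - a²/2`.
-/

open Real Set

def dNum (c L : ℝ) : ℝ :=
  3 * (c ^ 2 - 1) ^ 2 - 2 * (c ^ 2 - 1) * (c ^ 2 + 4 * c + 1) * L + 3 * c * (c + 1) ^ 2 * L ^ 2

def dDen (c L : ℝ) : ℝ := 2 * c * (c - 1) ^ 2 * L ^ 2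

def dDerivNum (c L : ℝ) : ℝ :=
  (-12 * c ^ 3 - 12 * c ^ 2) * L ^ 3
    + (-2 * c ^ 5 + 6 * c ^ 4 + 16 * c ^ 3 - 16 * c ^ 2 - 6 * c + 2) * L ^ 2
    + (5 * c ^ 5 - 3 * c ^ 4 - 2 * c ^ 3 - 2 * c ^ 2 - 3 * c + 5) * L
    + (-6 * c ^ 5 + 6 * c ^ 4 + 12 * c ^ 3 - 12 * c ^ 2 - 6 * c + 6)

def dDerivNumShifted (a v : ℝ) : ℝ :=
  (12 * a ^ 3 + 48 * a ^ 2 + 60 * a + 24) * v ^ 3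
    + (2 * a ^ 6 + 6 * a ^ 5 + 20 * a ^ 4 + 76 * a ^ 3 + 108 * a ^ 2 + 48 * a) * v ^ 2
    - (a ^ 7 + 20 * a ^ 6 + 81 * a ^ 5 + 110 * a ^ 4 + 48 * a ^ 3) * v
    + (3 * a ^ 8 + 16 * a ^ 7 + 25 * a ^ 6 + 12 * a ^ 5)

lemma one_add_mul_kappa_add_eq {c : ℝ} (hc0 : 0 < c) (hc1 : c ≠ 1) :
    (1 + c) * kappa c + (1 + 1 / c) * kappa (1 / c) = dNum c (log c) / dDen c (log c) := by
  have hL := log_ne_zero_of_pos_of_ne_one hc0 hc1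
  have hc1' : c - 1 ≠ 0 := sub_ne_zero.mpr hc1
  unfold kappa dNum dDen
  rw [one_div, log_inv]
  field_simp
  ring

lemma hasDerivAt_dNum_div_dDen {c : ℝ} (hc0 : 0 < c) (hc1 : c ≠ 1) :
    HasDerivAt (fun x => dNum x (log x) / dDen x (log x))
      (dDerivNum c (log c) / (2 * c ^ 2 * (c - 1) ^ 3 * log c ^ 3)) c := by
  have hL := log_ne_zero_of_pos_of_ne_one hc0 hc1
  have hc1' : c - 1 ≠ 0 := sub_ne_zero.mpr hc1
  have hx := hasDerivAt_id' c
  have hl := hasDerivAt_log hc0.ne'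
  have hsq := (hx.fun_pow 2).sub_const 1
  have hN₀ := (hsq.fun_pow 2).const_mul 3
  have hN₁ := ((hsq.const_mul 2).mul (((hx.fun_pow 2).add (hx.const_mul 4)).add_const 1)).mul hl
  have hN₂ := ((hx.const_mul 3).mul ((hx.add_const 1).fun_pow 2)).mul (hl.fun_pow 2)
  have hD := ((hx.const_mul 2).mul ((hx.sub_const 1).fun_pow 2)).mul (hl.fun_pow 2)
  have hDne : dDen c (log c) ≠ 0 := by unfold dDen; positivity
  refine (((hN₀.sub hN₁).add hN₂).div hD hDne).congr_deriv ?_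
  simp only [Pi.mul_apply, Pi.add_apply, Pi.sub_apply, dDerivNum]
  field_simp
  ring

lemma dDerivNumShifted_nonneg {a v : ℝ} (ha : 0 < a) (hv : 0 ≤ v) :
    0 ≤ dDerivNumShifted a v := by
  set w := v - a ^ 2 / 2
  set C₂ := 2 * a ^ 6 + 18 * a ^ 5 + 68 * a ^ 4 + 136 * a ^ 3 + 132 * a ^ 2 + 48 * a
  set C₁ := 2 * a ^ 8 + 14 * a ^ 7 + 36 * a ^ 6 + 40 * a ^ 5 + 16 * a ^ 4
  have hC₂ : 0 < C₂ := by positivity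
  have hcert : 4 * C₂ * dDerivNumShifted a v =
      4 * C₂ * (12 * a ^ 3 + 48 * a ^ 2 + 60 * a + 24) * w ^ 2 * v + (2 * C₂ * w + C₁) ^ 2
        + 8 * a ^ 8 * (a ^ 6 + 11 * a ^ 5 + 47 * a ^ 4 + 101 * a ^ 3 + 116 * a ^ 2 + 68 * a + 16) := by
    simp only [dDerivNumShifted, w, C₂, C₁]
    ring
  have : 0 ≤ 4 * C₂ * dDerivNumShifted a v := by rw [hcert]; positivity
  exact nonneg_of_mul_nonneg_right this (by positivity)

lemma cube_mul_dDerivNum (c L : ℝ) :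
    c ^ 3 * dDerivNum c L = -dDerivNumShifted (c - 1) (c * L - (c - 1)) := by
  simp only [dDerivNum, dDerivNumShifted]
  ring

lemma dDerivNum_log_nonpos {c : ℝ} (hc : 1 < c) : dDerivNum c (log c) ≤ 0 := by
  have hc0 : 0 < c := by linarith
  have hv : 0 ≤ c * log c - (c - 1) := by
    have := mul_le_mul_of_nonneg_left (one_sub_inv_le_log_of_pos hc0) hc0.le
    rwa [mul_sub, mul_one, mul_inv_cancel₀ hc0.ne', ← sub_nonneg] at this
  have hQ := dDerivNumShifted_nonneg (sub_pos.mpr hc) hv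
  have hprod : c ^ 3 * dDerivNum c (log c) ≤ 0 := by
    rw [cube_mul_dDerivNum]
    exact neg_nonpos.mpr hQ
  exact nonpos_of_mul_nonpos_right hprod (by positivity)

lemma antitoneOn_dNum_div_dDen :
    AntitoneOn (fun c => dNum c (log c) / dDen c (log c)) (Ioi 1) := by
  have hderiv := fun c (hc : c ∈ Ioi (1 : ℝ)) =>
    hasDerivAt_dNum_div_dDen (by linarith [mem_Ioi.mp hc]) (ne_of_gt hc)
  refine antitoneOn_of_hasDerivWithinAt_nonpos (convex_Ioi 1)
    (fun c hc => (hderiv c hc).continuousAt.continuousWithinAt)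
    (fun c hc => (hderiv c (interior_subset hc)).hasDerivWithinAt) fun c hc => ?_
  rw [interior_Ioi, mem_Ioi] at hc
  have hc' : 0 < c - 1 := sub_pos.mpr hc
  have hL : 0 < log c := log_pos hc
  exact div_nonpos_of_nonpos_of_nonneg (dDerivNum_log_nonpos hc) (by positivity)

theorem stmt_16 :
    AntitoneOn (fun c : ℝ => (1 + c) * kappa c + (1 + 1 / c) * kappa (1 / c))
      (Set.Ioi (1:ℝ)) :=
  (EqOn.congr_antitoneOn fun c (hc : 1 < c) =>
    one_add_mul_kappa_add_eq (by linarith) hc.ne').mpr antitoneOn_dNum_div_dDen
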